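/- arXiv:0808.1669 — 6 statements merged into one kernel-verified Lean document; each statement's English description precedes it below -/
import Mathlib

section
/- Let X₁, X₂ be i.i.d. random variables with values in [0,1] and common mean m, and let 0 ≤ t < 2m. If additionally t/2 ≤ m ≤ (2t+1)/5, then P(X₁ + X₂ ≤ t) ≤ 4(1-m)²/(2-t)². -/
/-!
Split at the level `t / 2` and put `r = P(X ≤ t/2)`, `d = E[(t/2 - X)⁺]`. Since `X₁ + X₂ ≤ t`
forces `min X₁ X₂ ≤ t/2`, `P(X₁ + X₂ ≤ t) ≤ 1 - (1 - r)²`. Alternatively, if `X₁ = x > t/2`,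
Markov's inequality on the lower tail gives `(1 - t/2) P(X₂ ≤ t - x) ≤ d + r (1 - x)`; integrating
over `x > t/2` and using `d + (1 - t/2) r + E[(1 - X); X > t/2] = 1 - m` bounds the event by
`r² + 2 (d (1 - r) + r E[(1 - X); X > t/2]) / (1 - t/2)`. The smaller of the two bounds is at most
`(1 - m)² / (1 - t/2)²` as long as `4 (1 - t/2) ≤ 5 (1 - m)`.
-/

open MeasureTheory Set

lemma mul_measureReal_Iic_le_setIntegral_sub {μ : Measure ℝ} [IsFiniteMeasure μ] {a s : ℝ}
    (hint : IntegrableOn (fun y => y) (Iic a) μ) (hs : s ≤ a) :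
    (a - s) * μ.real (Iic s) ≤ ∫ y in Iic a, (a - y) ∂μ := by
  have hsub : Iic s ⊆ Iic a := Iic_subset_Iic.2 hs
  have hint' : IntegrableOn (fun y => a - y) (Iic a) μ :=
    (integrableOn_const (by finiteness)).sub hint
  calc (a - s) * μ.real (Iic s) ≤ ∫ y in Iic s, (a - y) ∂μ :=
        setIntegral_ge_of_const_le_real measurableSet_Iic (measure_ne_top _ _)
          (fun y hy => by linarith [mem_Iic.1 hy]) (hint'.mono_set hsub)
    _ ≤ ∫ y in Iic a, (a - y) ∂μ :=
        setIntegral_mono_set hint'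
          ((ae_restrict_iff' measurableSet_Iic).2 (ae_of_all _ fun y hy => sub_nonneg.2 hy))
          hsub.eventuallyLE

lemma mul_measureReal_Iic_sub_le {μ : Measure ℝ} [IsFiniteMeasure μ] {t x : ℝ}
    (hint : IntegrableOn (fun y => y) (Iic (t / 2)) μ) (hx : t / 2 ≤ x) (hx1 : x ≤ 1) :
    (1 - t / 2) * μ.real (Iic (t - x))
      ≤ ∫ y in Iic (t / 2), (t / 2 - y) ∂μ + μ.real (Iic (t / 2)) * (1 - x) := by
  have hmarkov := mul_measureReal_Iic_le_setIntegral_sub hint (s := t - x) (by linarith)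
  have hmono : μ.real (Iic (t - x)) ≤ μ.real (Iic (t / 2)) :=
    measureReal_mono (Iic_subset_Iic.2 (by linarith))
  nlinarith [mul_le_mul_of_nonneg_left hmono (sub_nonneg.2 hx1)]

lemma mul_setIntegral_measureReal_Iic_sub_le {μ : Measure ℝ} [IsFiniteMeasure μ] {t : ℝ}
    (hint : Integrable (fun y => y) μ) (hle : ∀ᵐ x ∂μ, x ≤ 1) :
    (1 - t / 2) * ∫ x in Ioi (t / 2), μ.real (Iic (t - x)) ∂μ
      ≤ (∫ y in Iic (t / 2), (t / 2 - y) ∂μ) * μ.real (Ioi (t / 2))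
        + μ.real (Iic (t / 2)) * ∫ x in Ioi (t / 2), (1 - x) ∂μ := by
  set d := ∫ y in Iic (t / 2), (t / 2 - y) ∂μ
  set r := μ.real (Iic (t / 2))
  have hanti : Antitone fun x => μ.real (Iic (t - x)) := fun x x' hxx' =>
    measureReal_mono (Iic_subset_Iic.2 (by linarith))
  have hK : Integrable (fun x => μ.real (Iic (t - x))) μ :=
    .of_bound hanti.measurable.aestronglyMeasurable (μ.real univ)
      (ae_of_all _ fun x => by
        rw [Real.norm_eq_abs, abs_of_nonneg measureReal_nonneg]
        exact measureReal_mono (subset_univ _))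
  have h1x : Integrable (fun x : ℝ => 1 - x) μ := (integrable_const 1).sub hint
  rw [← integral_const_mul]
  calc ∫ x in Ioi (t / 2), (1 - t / 2) * μ.real (Iic (t - x)) ∂μ
      ≤ ∫ x in Ioi (t / 2), (d + r * (1 - x)) ∂μ := by
        refine setIntegral_mono_on_ae (hK.const_mul _).integrableOn
          ((integrable_const d).add (h1x.const_mul r)).integrableOn measurableSet_Ioi ?_
        filter_upwards [hle] with x hx1 hx
        exact mul_measureReal_Iic_sub_le hint.integrableOn (mem_Ioi.1 hx).le hx1
    _ = d * μ.real (Ioi (t / 2)) + r * ∫ x in Ioi (t / 2), (1 - x) ∂μ := by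
        rw [integral_add (integrable_const d).integrableOn (h1x.const_mul r).integrableOn,
          setIntegral_const, integral_const_mul, smul_eq_mul, mul_comm]

lemma measureReal_prod_setOf_add_le_le_one_sub {μ : Measure ℝ} [IsProbabilityMeasure μ]
    {a t : ℝ} (ht : t ≤ 2 * a) :
    (μ.prod μ).real {p : ℝ × ℝ | p.1 + p.2 ≤ t} ≤ 1 - μ.real (Ioi a) ^ 2 := by
  have hsub : {p : ℝ × ℝ | p.1 + p.2 ≤ t} ⊆ (Ioi a ×ˢ Ioi a)ᶜ := by
    rintro ⟨x, y⟩ hxy ⟨hx, hy⟩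
    simp only [mem_ofPred_eq, mem_Ioi] at hxy hx hy
    linarith
  calc (μ.prod μ).real {p : ℝ × ℝ | p.1 + p.2 ≤ t} ≤ (μ.prod μ).real (Ioi a ×ˢ Ioi a)ᶜ :=
        measureReal_mono hsub
    _ = 1 - μ.real (Ioi a) ^ 2 := by
        rw [probReal_compl_eq_one_sub (measurableSet_Ioi.prod measurableSet_Ioi),
          measureReal_prod_prod, sq]

lemma prod_setOf_add_le_inter_prod_univ {μ ν : Measure ℝ} [SFinite μ] [SFinite ν] (s : Set ℝ)
    (t : ℝ) :
    (μ.prod ν) ({p : ℝ × ℝ | p.1 + p.2 ≤ t} ∩ s ×ˢ univ) = ∫⁻ x in s, ν (Iic (t - x)) ∂μ := by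
  have hS : MeasurableSet {p : ℝ × ℝ | p.1 + p.2 ≤ t} :=
    measurableSet_le (measurable_fst.add measurable_snd) measurable_const
  rw [← Measure.restrict_apply hS, ← Measure.restrict_univ (μ := ν), ← Measure.prod_restrict,
    Measure.restrict_univ, Measure.prod_apply hS]
  congr with x
  congr with y
  simp only [mem_preimage, mem_ofPred_eq, mem_Iic]
  constructor <;> intro h <;> linarith

lemma measureReal_prod_setOf_add_le_le_sq_add {μ : Measure ℝ} [IsFiniteMeasure μ]
    (a t : ℝ) :
    (μ.prod μ).real {p : ℝ × ℝ | p.1 + p.2 ≤ t}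
      ≤ μ.real (Iic a) ^ 2 + 2 * ∫ x in Ioi a, μ.real (Iic (t - x)) ∂μ := by
  set S := {p : ℝ × ℝ | p.1 + p.2 ≤ t}
  set T := S ∩ Ioi a ×ˢ univ
  have hTm : MeasurableSet T :=
    (measurableSet_le (measurable_fst.add measurable_snd) measurable_const).inter
      (measurableSet_Ioi.prod .univ)
  have hT : (μ.prod μ).real T = ∫ x in Ioi a, μ.real (Iic (t - x)) ∂μ := by
    have hanti : Antitone fun x => μ (Iic (t - x)) := fun x x' hxx' =>
      measure_mono (Iic_subset_Iic.2 (by linarith))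
    rw [measureReal_def, prod_setOf_add_le_inter_prod_univ,
      ← integral_toReal hanti.measurable.aemeasurable (ae_of_all _ fun _ => measure_lt_top _ _)]
    rfl
  have hswap : (μ.prod μ).real (Prod.swap ⁻¹' T) = (μ.prod μ).real T := by
    rw [measureReal_def, measureReal_def, ← Measure.map_apply measurable_swap hTm,
      Measure.prod_swap]
  have hcover : S ⊆ Iic a ×ˢ Iic a ∪ T ∪ Prod.swap ⁻¹' T := by
    rintro ⟨x, y⟩ hxy
    by_cases hx : a < x
    · exact Or.inl (Or.inr ⟨hxy, hx, mem_univ y⟩)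
    by_cases hy : a < y
    · exact Or.inr ⟨(by rw [add_comm]; exact hxy : y + x ≤ t), hy, mem_univ x⟩
    exact Or.inl (Or.inl ⟨not_lt.1 hx, not_lt.1 hy⟩)
  calc (μ.prod μ).real S ≤ (μ.prod μ).real (Iic a ×ˢ Iic a ∪ T ∪ Prod.swap ⁻¹' T) :=
        measureReal_mono hcover
    _ ≤ (μ.prod μ).real (Iic a ×ˢ Iic a) + (μ.prod μ).real T
          + (μ.prod μ).real (Prod.swap ⁻¹' T) :=
        (measureReal_union_le _ _).trans (add_le_add_left (measureReal_union_le _ _) _)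
    _ = μ.real (Iic a) ^ 2 + 2 * ∫ x in Ioi a, μ.real (Iic (t - x)) ∂μ := by
        rw [measureReal_prod_prod, hswap, hT]
        ring

lemma setIntegral_Iic_sub_add_setIntegral_Ioi_one_sub {μ : Measure ℝ} [IsProbabilityMeasure μ]
    (hint : Integrable (fun x => x) μ) (a : ℝ) :
    ∫ y in Iic a, (a - y) ∂μ + (1 - a) * μ.real (Iic a) + ∫ x in Ioi a, (1 - x) ∂μ
      = 1 - ∫ x, x ∂μ := by
  have h1x : Integrable (fun x : ℝ => 1 - x) μ := (integrable_const 1).sub hint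
  have hax : IntegrableOn (fun y => a - y) (Iic a) μ := ((integrable_const a).sub hint).integrableOn
  have hsplit :
      ∫ x in Iic a, (1 - x) ∂μ = ∫ y in Iic a, (a - y) ∂μ + (1 - a) * μ.real (Iic a) :=
    calc ∫ x in Iic a, (1 - x) ∂μ = ∫ x in Iic a, ((a - x) + (1 - a)) ∂μ := by
          congr with x
          ring
      _ = ∫ y in Iic a, (a - y) ∂μ + (1 - a) * μ.real (Iic a) := by
          rw [integral_add hax (integrable_const _).integrableOn, setIntegral_const, smul_eq_mul,
            mul_comm]
  rw [← hsplit, ← compl_Iic, integral_add_compl measurableSet_Iic h1x,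
    integral_sub (integrable_const 1) hint, integral_const, probReal_univ, one_smul]

lemma sq_mul_le_sq_of_two_bounds {b g r d e K p : ℝ} (hb : 0 < b) (hbg : 4 * b ≤ 5 * g)
    (hd : 0 ≤ d) (he : 0 ≤ e) (hsum : d + b * r + e = g)
    (hI : p ≤ 1 - (1 - r) ^ 2) (hII : p ≤ r ^ 2 + 2 * K) (hK : b * K ≤ d * (1 - r) + r * e) :
    b ^ 2 * p ≤ g ^ 2 := by
  rcases le_or_gt (2 * (b * r)) g with hsmall | hlarge
  · calc b ^ 2 * p ≤ b ^ 2 * (1 - (1 - r) ^ 2) := mul_le_mul_of_nonneg_left hI (sq_nonneg b)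
      _ = 2 * b * (b * r) - (b * r) ^ 2 := by ring
      _ ≤ g ^ 2 := by nlinarith [mul_nonneg (sub_nonneg.2 hsmall) (by linarith : 0 ≤ 2 * g - b * r)]
  · have hgap : 2 * b * d * (1 - 2 * r) ≤ (g - b * r) ^ 2 := by
      rcases le_or_gt (1 / 2) r with hhalf | hhalf
      · nlinarith [mul_nonneg (mul_nonneg hb.le hd) (by linarith : 0 ≤ 2 * r - 1)]
      · have h1 : 2 * b * (1 - 2 * r) ≤ g - b * r := by linarith
        have h2 : d ≤ g - b * r := by linarith
        nlinarith [mul_le_mul h1 h2 hd (by linarith),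
          mul_nonneg hb.le (by linarith : 0 ≤ 1 - 2 * r)]
    calc b ^ 2 * p ≤ b ^ 2 * (r ^ 2 + 2 * K) := mul_le_mul_of_nonneg_left hII (sq_nonneg b)
      _ = b ^ 2 * r ^ 2 + 2 * b * (b * K) := by ring
      _ ≤ b ^ 2 * r ^ 2 + 2 * b * (d * (1 - r) + r * e) := by gcongr
      _ = g ^ 2 - ((g - b * r) ^ 2 - 2 * b * d * (1 - 2 * r)) := by
        rw [← hsum]; ring
      _ ≤ g ^ 2 := by linarith

theorem stmt_2_general (μ : Measure ℝ) [IsProbabilityMeasure μ]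
    (hsupp : μ (Set.Icc (0:ℝ) 1)ᶜ = 0)
    (m t : ℝ) (hm1 : m < 1)
    (hmean : ∫ x, x ∂μ = m) (ht : t < 2 * m)
    (h2 : m ≤ (2 * t + 1) / 5) :
    (μ.prod μ) {p : ℝ × ℝ | p.1 + p.2 ≤ t}
      ≤ ENNReal.ofReal (4 * (1 - m) ^ 2 / (2 - t) ^ 2) := by
  have hae : ∀ᵐ x ∂μ, x ∈ Icc (0 : ℝ) 1 := ae_iff.2 hsupp
  have hint : Integrable (fun x : ℝ => x) μ :=
    .of_bound measurable_id.aestronglyMeasurable 1 <| hae.mono fun x hx => by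
      rw [Real.norm_eq_abs, abs_le]
      exact ⟨by linarith [hx.1], hx.2⟩
  have hle : ∀ᵐ x ∂μ, x ≤ 1 := hae.mono fun x hx => hx.2
  have hd : 0 ≤ ∫ y in Iic (t / 2), (t / 2 - y) ∂μ :=
    setIntegral_nonneg measurableSet_Iic fun y hy => sub_nonneg.2 hy
  have he : 0 ≤ ∫ x in Ioi (t / 2), (1 - x) ∂μ :=
    integral_nonneg_of_ae (ae_restrict_of_ae (hle.mono fun x hx => sub_nonneg.2 hx))
  have hIoi : μ.real (Ioi (t / 2)) = 1 - μ.real (Iic (t / 2)) := by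
    rw [← compl_Iic, probReal_compl_eq_one_sub measurableSet_Iic]
  have hI := measureReal_prod_setOf_add_le_le_one_sub (μ := μ) (mul_div_cancel₀ t two_ne_zero).ge
  have hII := measureReal_prod_setOf_add_le_le_sq_add (μ := μ) (t / 2) t
  have hK := mul_setIntegral_measureReal_Iic_sub_le (t := t) hint hle
  have hsum := setIntegral_Iic_sub_add_setIntegral_Ioi_one_sub hint (t / 2)
  rw [hIoi] at hI hK
  rw [hmean] at hsum
  have hp := sq_mul_le_sq_of_two_bounds (by linarith) (by linarith) hd he hsum hI hII hK
  rw [← ofReal_measureReal]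
  refine ENNReal.ofReal_le_ofReal ((le_div_iff₀ (by nlinarith)).2 ?_)
  linear_combination 4 * hp

/-- Hoeffding–Shrikande bound (middle case) for the sum of two i.i.d. random variables
on `[0,1]` with mean `m`: if `t/2 ≤ m ≤ (2t+1)/5` then
`P(X₁ + X₂ ≤ t) ≤ 4(1-m)²/(2-t)²`. -/
theorem stmt_2 (μ : Measure ℝ) [IsProbabilityMeasure μ]
    (hsupp : μ (Set.Icc (0:ℝ) 1)ᶜ = 0)
    (m t : ℝ) (hm0 : 0 < m) (hm1 : m < 1)
    (hmean : ∫ x, x ∂μ = m) (ht0 : 0 ≤ t) (ht : t < 2 * m)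
    (h1 : t / 2 ≤ m) (h2 : m ≤ (2 * t + 1) / 5) :
    (μ.prod μ) {p : ℝ × ℝ | p.1 + p.2 ≤ t}
      ≤ ENNReal.ofReal (4 * (1 - m) ^ 2 / (2 - t) ^ 2) :=
  stmt_2_general μ hsupp m t hm1 hmean ht h2
end

section
/- Let X₁, X₂ be i.i.d. random variables with values in [0,1] and common mean m. If 1 ≤ t < 2m and m ≥ (2t+1)/5, then P(X₁ + X₂ ≤ t) ≤ 2(1-m)/(2-t) - (1-m)²/(2-t)², which equals 1 - ((1+m-t)/(2-t))². -/
open MeasureTheory Set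

/-!
Rescale so that the threshold becomes `0`: `W = max (-1) (min 1 ((2X - t)/(2 - t)))` takes values
in `[-1, 1]`, `X₁ + X₂ ≤ t` forces `W₁ + W₂ ≤ 0`, and `E W ≥ (2m - t)/(2 - t) ≥ 1/5`. It remains to
show `P(W₁ + W₂ > 0) ≥ ((1 + E W)/2)²`. Let `a, e, b` be the probabilities of `W > 0`, `W = 0`,
`W < 0`, and `κ = E W⁺`, `ρ = E W⁻`. Two pointwise lower bounds for `𝟙{w + w' > 0}` by sums of
products `f w * g w'` integrate against `μ ⊗ μ` to `a² + 2ea` and `a² + 2(e - ρ)a + 2bκ`; an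
elementary case analysis shows that one of these is at least `((1 + κ - ρ)/2)²` when
`κ - ρ ≥ 1/5`.
-/

namespace HoeffdingShrikhande

noncomputable def indPos : ℝ → ℝ := (Ioi 0).indicator 1
noncomputable def indZero : ℝ → ℝ := ({0} : Set ℝ).indicator 1
noncomputable def indNeg : ℝ → ℝ := (Iio 0).indicator 1

lemma indPos_add_indZero_add_indNeg (w : ℝ) : indPos w + indZero w + indNeg w = 1 := by
  rcases lt_trichotomy w 0 with h | h | h <;>
    simp [indPos, indZero, indNeg, *, ne_of_lt, ne_of_gt, not_lt_of_gt]

lemma posPart_le_indPos {w : ℝ} (hw : w ≤ 1) : w⁺ ≤ indPos w := by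
  rcases le_or_gt w 0 with h | h
  · simp [indPos, h, h.not_gt]
  · simpa [indPos, h, h.le] using hw

noncomputable def kernel₁ (w w' : ℝ) : ℝ :=
  indPos w * indPos w' + (indZero w * indPos w' + indPos w * indZero w')

noncomputable def kernel₂ (w w' : ℝ) : ℝ :=
  indPos w * indPos w' + ((indZero w - w⁻) * indPos w' + indPos w * (indZero w' - w'⁻))
    + (indNeg w * w'⁺ + w⁺ * indNeg w')

lemma kernel₁_le (w w' : ℝ) : kernel₁ w w' ≤ if 0 < w + w' then 1 else 0 := by
  rcases lt_trichotomy w 0 with h | h | h <;> rcases lt_trichotomy w' 0 with h' | h' | h' <;>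
    simp [kernel₁, indPos, indZero, *, ne_of_lt, ne_of_gt, not_lt_of_gt, add_pos] <;>
    split_ifs <;> linarith

lemma kernel₂_le {w w' : ℝ} (hw : w ≤ 1) (hw' : w' ≤ 1) :
    kernel₂ w w' ≤ if 0 < w + w' then 1 else 0 := by
  rcases lt_trichotomy w 0 with h | h | h <;> rcases lt_trichotomy w' 0 with h' | h' | h' <;>
    simp [kernel₂, indPos, indZero, indNeg, *, le_of_lt, ne_of_lt, ne_of_gt, not_lt_of_gt,
      add_pos] <;>
    split_ifs <;> linarith

lemma sq_le_of_kernel_bounds {ν a e b κ ρ P : ℝ} (hν : 3 / 5 ≤ ν) (he : 0 ≤ e)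
    (hsum : a + e + b = 1) (hκ : κ ≤ a) (hρ : 0 ≤ ρ) (hκρ : κ - ρ = 2 * ν - 1)
    (h₁ : a ^ 2 + 2 * (e * a) ≤ P) (h₂ : a ^ 2 + 2 * ((e - ρ) * a) + 2 * (b * κ) ≤ P) :
    ν ^ 2 ≤ P := by
  rcases le_or_gt ν a with hνa | haν
  · nlinarith
  -- At `ρ = 0`, `a = κ = 2ν - 1` the second bound equals `ν² + (5ν - 3)(1 - ν)`: this is where
  -- `ν ≥ 3/5` is needed.
  · nlinarith

section

variable {Ω : Type*} [MeasurableSpace Ω] {μ : Measure Ω}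

lemma integrable_prod_mul_add_mul_swap {f g : Ω → ℝ} (hf : Integrable f μ) (hg : Integrable g μ) :
    Integrable (fun p => f p.1 * g p.2 + g p.1 * f p.2) (μ.prod μ) :=
  (hf.mul_prod hg).fun_add (hg.mul_prod hf)

lemma integral_prod_mul_add_mul_swap [SFinite μ] {f g : Ω → ℝ} (hf : Integrable f μ)
    (hg : Integrable g μ) :
    ∫ p, (f p.1 * g p.2 + g p.1 * f p.2) ∂μ.prod μ = 2 * ((∫ ω, f ω ∂μ) * ∫ ω, g ω ∂μ) := by
  rw [integral_add (hf.mul_prod hg) (hg.mul_prod hf), integral_prod_mul, integral_prod_mul]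
  ring

variable [IsFiniteMeasure μ] {W : Ω → ℝ}

lemma measurableSet_add_pos (hW : Measurable W) : MeasurableSet {p : Ω × Ω | 0 < W p.1 + W p.2} :=
  measurableSet_lt measurable_const ((hW.comp measurable_fst).add (hW.comp measurable_snd))

lemma integrable_of_forall_mem_Icc (hW : Measurable W) (hW1 : ∀ ω, W ω ∈ Icc (-1) 1) :
    Integrable W μ :=
  .of_bound hW.aestronglyMeasurable 1 (.of_forall fun ω => abs_le.2 (hW1 ω))

lemma integrable_indicator_one_comp (hW : Measurable W) {s : Set ℝ} (hs : MeasurableSet s) :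
    Integrable (fun ω => s.indicator (1 : ℝ → ℝ) (W ω)) μ :=
  (integrable_const (1 : ℝ)).indicator (hW hs) |>.congr (.of_forall fun _ => rfl)

lemma integrable_indPos_comp (hW : Measurable W) : Integrable (fun ω => indPos (W ω)) μ :=
  integrable_indicator_one_comp hW measurableSet_Ioi

lemma integrable_indZero_comp (hW : Measurable W) : Integrable (fun ω => indZero (W ω)) μ :=
  integrable_indicator_one_comp hW (measurableSet_singleton 0)

lemma integrable_indNeg_comp (hW : Measurable W) : Integrable (fun ω => indNeg (W ω)) μ :=
  integrable_indicator_one_comp hW measurableSet_Iio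

lemma integral_kernel₁ (hW : Measurable W) :
    ∫ p, kernel₁ (W p.1) (W p.2) ∂μ.prod μ
      = (∫ ω, indPos (W ω) ∂μ) ^ 2 + 2 * ((∫ ω, indZero (W ω) ∂μ) * ∫ ω, indPos (W ω) ∂μ) := by
  have hpos := integrable_indPos_comp (μ := μ) hW
  have hzero := integrable_indZero_comp (μ := μ) hW
  simp only [kernel₁]
  rw [integral_add (hpos.mul_prod hpos) (integrable_prod_mul_add_mul_swap hzero hpos),
    integral_prod_mul (fun ω => indPos (W ω)) (fun ω => indPos (W ω)),
    integral_prod_mul_add_mul_swap hzero hpos, sq]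

lemma integral_kernel₂ (hW : Measurable W) (hW1 : ∀ ω, W ω ∈ Icc (-1) 1) :
    ∫ p, kernel₂ (W p.1) (W p.2) ∂μ.prod μ
      = (∫ ω, indPos (W ω) ∂μ) ^ 2
        + 2 * (((∫ ω, indZero (W ω) ∂μ) - ∫ ω, (W ω)⁻ ∂μ) * ∫ ω, indPos (W ω) ∂μ)
        + 2 * ((∫ ω, indNeg (W ω) ∂μ) * ∫ ω, (W ω)⁺ ∂μ) := by
  have hpos := integrable_indPos_comp (μ := μ) hW
  have hzero := integrable_indZero_comp (μ := μ) hW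
  have hneg := integrable_indNeg_comp (μ := μ) hW
  have hWint := integrable_of_forall_mem_Icc (μ := μ) hW hW1
  have hplus : Integrable (fun ω => (W ω)⁺) μ := hWint.pos_part
  have hminus : Integrable (fun ω => (W ω)⁻) μ := hWint.neg_part
  have hzero_sub : Integrable (fun ω => indZero (W ω) - (W ω)⁻) μ := hzero.sub hminus
  simp only [kernel₂]
  rw [integral_add ((hpos.mul_prod hpos).fun_add (integrable_prod_mul_add_mul_swap hzero_sub hpos))
      (integrable_prod_mul_add_mul_swap hneg hplus),
    integral_add (hpos.mul_prod hpos) (integrable_prod_mul_add_mul_swap hzero_sub hpos),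
    integral_prod_mul (fun ω => indPos (W ω)) (fun ω => indPos (W ω)),
    integral_prod_mul_add_mul_swap hzero_sub hpos, integral_prod_mul_add_mul_swap hneg hplus,
    integral_sub hzero hminus, sq]

lemma integral_le_measureReal_add_pos {k : Ω × Ω → ℝ} (hW : Measurable W)
    (hle : ∀ p, k p ≤ if 0 < W p.1 + W p.2 then 1 else 0) :
    ∫ p, k p ∂μ.prod μ ≤ (μ.prod μ).real {p | 0 < W p.1 + W p.2} := by
  by_cases hk : Integrable k (μ.prod μ)
  · rw [← integral_indicator_one (measurableSet_add_pos hW)]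
    exact integral_mono hk ((integrable_const 1).indicator (measurableSet_add_pos hW)) fun p => by
      simpa [indicator_apply] using hle p
  · rw [integral_undef hk]
    exact measureReal_nonneg

end

section

variable {Ω : Type*} [MeasurableSpace Ω] {μ : Measure Ω} [IsProbabilityMeasure μ] {W : Ω → ℝ}

theorem sq_le_measureReal_add_pos (hW : Measurable W) (hW1 : ∀ ω, W ω ∈ Icc (-1) 1)
    (hmean : 1 / 5 ≤ ∫ ω, W ω ∂μ) :
    ((1 + ∫ ω, W ω ∂μ) / 2) ^ 2 ≤ (μ.prod μ).real {p | 0 < W p.1 + W p.2} := by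
  have hpos := integrable_indPos_comp (μ := μ) hW
  have hzero := integrable_indZero_comp (μ := μ) hW
  have hneg := integrable_indNeg_comp (μ := μ) hW
  have hWint := integrable_of_forall_mem_Icc (μ := μ) hW hW1
  have hplus : Integrable (fun ω => (W ω)⁺) μ := hWint.pos_part
  have hminus : Integrable (fun ω => (W ω)⁻) μ := hWint.neg_part
  have hsum : ∫ ω, indPos (W ω) ∂μ + ∫ ω, indZero (W ω) ∂μ + ∫ ω, indNeg (W ω) ∂μ = 1 := by
    rw [← integral_add hpos hzero, ← integral_add (hpos.fun_add hzero) hneg]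
    simp [indPos_add_indZero_add_indNeg]
  have hmean_eq : ∫ ω, (W ω)⁺ ∂μ - ∫ ω, (W ω)⁻ ∂μ = 2 * ((1 + ∫ ω, W ω ∂μ) / 2) - 1 := by
    rw [← integral_sub hplus hminus]
    simp only [posPart_sub_negPart]
    ring
  have h₁ := integral_le_measureReal_add_pos (μ := μ) hW fun p => kernel₁_le (W p.1) (W p.2)
  have h₂ := integral_le_measureReal_add_pos (μ := μ) hW fun p => kernel₂_le (hW1 p.1).2 (hW1 p.2).2
  rw [integral_kernel₁ hW] at h₁
  rw [integral_kernel₂ hW hW1] at h₂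
  exact sq_le_of_kernel_bounds (by linarith)
    (integral_nonneg fun ω => indicator_nonneg (fun _ _ => zero_le_one) (W ω)) hsum
    (integral_mono hplus hpos fun ω => posPart_le_indPos (hW1 ω).2)
    (integral_nonneg fun ω => negPart_nonneg _) hmean_eq h₁ h₂

theorem measureReal_add_nonpos_le (hW : Measurable W) (hW1 : ∀ ω, W ω ∈ Icc (-1) 1)
    (hmean : 1 / 5 ≤ ∫ ω, W ω ∂μ) :
    (μ.prod μ).real {p | W p.1 + W p.2 ≤ 0} ≤ 1 - ((1 + ∫ ω, W ω ∂μ) / 2) ^ 2 := by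
  have hcompl : {p : Ω × Ω | W p.1 + W p.2 ≤ 0} = {p | 0 < W p.1 + W p.2}ᶜ := by
    ext p; simp
  rw [hcompl, probReal_compl_eq_one_sub (measurableSet_add_pos hW)]
  linarith [sq_le_measureReal_add_pos hW hW1 hmean]

end

noncomputable def rescale (t x : ℝ) : ℝ := max (-1) (min 1 ((2 * x - t) / (2 - t)))

lemma rescale_mem_Icc (t x : ℝ) : rescale t x ∈ Icc (-1) 1 :=
  ⟨le_max_left _ _, max_le (by norm_num) (min_le_left _ _)⟩

lemma measurable_rescale (t : ℝ) : Measurable (rescale t) := by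
  unfold rescale; fun_prop

lemma div_le_rescale {t x : ℝ} (ht : t < 2) (hx : x ≤ 1) : (2 * x - t) / (2 - t) ≤ rescale t x := by
  have : (2 * x - t) / (2 - t) ≤ 1 := by rw [div_le_one (by linarith)]; linarith
  exact (le_min this le_rfl).trans (le_max_right _ _)

lemma rescale_add_rescale_nonpos {t x y : ℝ} (ht : t < 2) (hxy : x + y ≤ t) :
    rescale t x + rescale t y ≤ 0 := by
  have hle (z : ℝ) (hz : -1 ≤ (2 * z - t) / (2 - t)) : rescale t z ≤ (2 * z - t) / (2 - t) :=
    max_le hz (min_le_right _ _)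
  rcases lt_or_ge ((2 * x - t) / (2 - t)) (-1) with hx | hx
  · have : rescale t x = -1 := max_eq_left ((min_le_right _ _).trans hx.le)
    linarith [(rescale_mem_Icc t y).2]
  rcases lt_or_ge ((2 * y - t) / (2 - t)) (-1) with hy | hy
  · have : rescale t y = -1 := max_eq_left ((min_le_right _ _).trans hy.le)
    linarith [(rescale_mem_Icc t x).2]
  have : (2 * x - t) / (2 - t) + (2 * y - t) / (2 - t) ≤ 0 := by
    rw [← add_div]; exact div_nonpos_of_nonpos_of_nonneg (by linarith) (by linarith)
  linarith [hle x hx, hle y hy]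

lemma div_le_integral_rescale {μ : Measure ℝ} [IsProbabilityMeasure μ] {t : ℝ} (ht : t < 2)
    (hμ : ∀ᵐ x ∂μ, x ∈ Icc 0 1) :
    (2 * ∫ x, x ∂μ - t) / (2 - t) ≤ ∫ x, rescale t x ∂μ := by
  have hid : Integrable (fun x : ℝ => x) μ := .of_bound aestronglyMeasurable_id 1 <| by
    filter_upwards [hμ] with x hx
    rw [Real.norm_eq_abs, abs_le]
    exact ⟨by linarith [hx.1], hx.2⟩
  calc (2 * ∫ x, x ∂μ - t) / (2 - t) = ∫ x, (2 * x - t) / (2 - t) ∂μ := by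
        rw [integral_div, integral_sub (hid.const_mul 2) (integrable_const t), integral_const_mul]
        simp
    _ ≤ ∫ x, rescale t x ∂μ :=
        integral_mono_ae (((hid.const_mul 2).sub (integrable_const t)).div_const _)
          (integrable_of_forall_mem_Icc (measurable_rescale t) (rescale_mem_Icc t))
          (by filter_upwards [hμ] with x hx using div_le_rescale ht hx.2)

end HoeffdingShrikhande

open HoeffdingShrikhande

theorem stmt_3_general (μ : Measure ℝ) [IsProbabilityMeasure μ]
    (hsupp : μ (Set.Icc (0:ℝ) 1)ᶜ = 0)
    (m t : ℝ) (hm1 : m < 1)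
    (hmean : ∫ x, x ∂μ = m)
    (h2 : (2 * t + 1) / 5 ≤ m) :
    (μ.prod μ) {p : ℝ × ℝ | p.1 + p.2 ≤ t}
      ≤ ENNReal.ofReal (2 * (1 - m) / (2 - t) - (1 - m) ^ 2 / (2 - t) ^ 2) ∧
    2 * (1 - m) / (2 - t) - (1 - m) ^ 2 / (2 - t) ^ 2
      = 1 - ((1 + m - t) / (2 - t)) ^ 2 := by
  have ht : t < 2 := by linarith
  have ht' : 2 - t ≠ 0 := by linarith
  refine ⟨?_, by field_simp; ring⟩
  have hbound : 2 * (1 - m) / (2 - t) - (1 - m) ^ 2 / (2 - t) ^ 2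
      = 1 - ((1 + (2 * m - t) / (2 - t)) / 2) ^ 2 := by
    field_simp; ring
  have hmeanW := hmean ▸ div_le_integral_rescale ht (mem_ae_iff.2 hsupp)
  have hfifth : 1 / 5 ≤ (2 * m - t) / (2 - t) := by rw [le_div_iff₀ (by linarith)]; linarith
  calc (μ.prod μ) {p : ℝ × ℝ | p.1 + p.2 ≤ t}
      ≤ (μ.prod μ) {p | rescale t p.1 + rescale t p.2 ≤ 0} :=
        measure_mono fun p hp => rescale_add_rescale_nonpos ht hp
    _ = ENNReal.ofReal ((μ.prod μ).real {p | rescale t p.1 + rescale t p.2 ≤ 0}) :=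
        (ofReal_measureReal).symm
    _ ≤ _ := by
        rw [hbound]
        refine ENNReal.ofReal_le_ofReal ((measureReal_add_nonpos_le (measurable_rescale t)
          (rescale_mem_Icc t) (hfifth.trans hmeanW)).trans ?_)
        gcongr

/-- Hoeffding–Shrikande bound (third case) for the sum of two i.i.d. random variables
on `[0,1]` with mean `m`: if `1 ≤ t < 2m` and `m ≥ (2t+1)/5` then
`P(X₁ + X₂ ≤ t) ≤ 2(1-m)/(2-t) - (1-m)²/(2-t)²`, which equals `1 - ((1+m-t)/(2-t))²`. -/
theorem stmt_3 (μ : Measure ℝ) [IsProbabilityMeasure μ]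
    (hsupp : μ (Set.Icc (0:ℝ) 1)ᶜ = 0)
    (m t : ℝ) (hm0 : 0 < m) (hm1 : m < 1)
    (hmean : ∫ x, x ∂μ = m) (ht1 : 1 ≤ t) (ht : t < 2 * m)
    (h2 : (2 * t + 1) / 5 ≤ m) :
    (μ.prod μ) {p : ℝ × ℝ | p.1 + p.2 ≤ t}
      ≤ ENNReal.ofReal (2 * (1 - m) / (2 - t) - (1 - m) ^ 2 / (2 - t) ^ 2) ∧
    2 * (1 - m) / (2 - t) - (1 - m) ^ 2 / (2 - t) ^ 2
      = 1 - ((1 + m - t) / (2 - t)) ^ 2 :=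
  stmt_3_general μ hsupp m t hm1 hmean h2
end

section
/- For fixed n and t, the function m ↦ p(m,t) = sup over probability measures μ on [0,1] with mean m of P_μ(S_n ≤ t) is non-increasing in m on (0,1). -/
/-!
If `X` has a law `μ` on `[0,1]` with mean `m₂`, then `c X` with `c = m₁ / m₂ ∈ (0,1]` has a law on
`[0,1]` with mean `m₁`. Since `c X ≤ X`, the sum of `n` independent copies can only decrease, so
`{S_n ≤ t}`, a lower set in `ℝⁿ`, gains probability; hence every value of the supremum at `m₂` is
dominated by one at `m₁`.
-/

open MeasureTheory

/-- `p n m t = sup_{μ ∈ D_m} P_μ(S_n ≤ t)`, the supremum over Borel probability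
measures on `[0,1]` with mean `m` of the probability that the sum of `n` i.i.d.
random variables with law `μ` is at most `t`. -/
noncomputable def pSup (n : ℕ) (m t : ℝ) : ENNReal :=
  ⨆ (μ : Measure ℝ) (_ : IsProbabilityMeasure μ ∧ μ (Set.Icc (0:ℝ) 1)ᶜ = 0 ∧
      (∫ x, x ∂μ) = m),
    Measure.pi (fun _ : Fin n => μ) {x | ∑ i, x i ≤ t}

namespace MeasureTheory.Measure

variable {ι α : Type*} [Fintype ι] [MeasurableSpace α] [Preorder α]

theorem pi_le_pi_map_of_isLowerSet (μ : Measure α) [IsFiniteMeasure μ] {f : α → α}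
    (hf : Measurable f) (hle : ∀ᵐ x ∂μ, f x ≤ x) {s : Set (ι → α)} (hs : MeasurableSet s)
    (hlower : IsLowerSet s) :
    Measure.pi (fun _ : ι => μ) s ≤ Measure.pi (fun _ : ι => μ.map f) s := by
  have hmp : MeasurePreserving (fun x : ι → α => fun i => f (x i))
      (Measure.pi fun _ => μ) (Measure.pi fun _ => μ.map f) :=
    measurePreserving_pi _ _ fun _ => ⟨hf, rfl⟩
  rw [← hmp.map_eq, map_apply hmp.measurable hs]
  have hle_pi : ∀ᵐ x ∂(Measure.pi fun _ : ι => μ), ∀ i, f (x i) ≤ x i :=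
    ae_all_iff.2 fun i => (quasiMeasurePreserving_eval (fun _ => μ) i).ae hle
  exact measure_mono_ae <| hle_pi.mono fun x hx hxs => hlower hx hxs

end MeasureTheory.Measure

theorem isLowerSet_sum_le {ι : Type*} [Fintype ι] (t : ℝ) :
    IsLowerSet {x : ι → ℝ | ∑ i, x i ≤ t} :=
  fun _ _ hyx hx => (Finset.sum_le_sum fun i _ => hyx i).trans hx

theorem measurableSet_sum_le {ι : Type*} [Fintype ι] (t : ℝ) :
    MeasurableSet {x : ι → ℝ | ∑ i, x i ≤ t} :=
  measurableSet_le (by fun_prop) measurable_const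

theorem map_const_mul_Icc_compl_eq_zero {μ : Measure ℝ} (hμ : μ (Set.Icc 0 1)ᶜ = 0) {c : ℝ}
    (hc₀ : 0 ≤ c) (hc₁ : c ≤ 1) : μ.map (c * ·) (Set.Icc 0 1)ᶜ = 0 := by
  rw [← mem_ae_iff, mem_ae_map_iff (by fun_prop) measurableSet_Icc]
  refine Filter.mem_of_superset (mem_ae_iff.2 hμ) fun x ⟨hx₀, hx₁⟩ => ?_
  exact ⟨mul_nonneg hc₀ hx₀, mul_le_one₀ hc₁ hx₀ hx₁⟩

theorem integral_id_map_const_mul (μ : Measure ℝ) (c : ℝ) :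
    ∫ x, x ∂μ.map (c * ·) = c * ∫ x, x ∂μ := by
  rw [integral_map (f := fun x => x) (by fun_prop) aestronglyMeasurable_id, integral_const_mul]

theorem stmt_4_general (n : ℕ) (t : ℝ) (m₁ m₂ : ℝ)
    (h₁ : 0 < m₁) (h₃ : 0 < m₂) (h : m₁ ≤ m₂) :
    pSup n m₂ t ≤ pSup n m₁ t := by
  refine iSup₂_le fun μ ⟨_, hsupp, hmean⟩ => ?_
  set c := m₁ / m₂
  have hc₀ : 0 ≤ c := by positivity
  have hc₁ : c ≤ 1 := (div_le_one h₃).2 h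
  have hdown : ∀ᵐ x ∂μ, c * x ≤ x := by
    filter_upwards [mem_ae_iff.2 hsupp] with x ⟨hx₀, _⟩
    exact mul_le_of_le_one_left hx₀ hc₁
  refine le_iSup₂_of_le (μ.map (c * ·)) ⟨Measure.isProbabilityMeasure_map (by fun_prop),
      map_const_mul_Icc_compl_eq_zero hsupp hc₀ hc₁, ?_⟩
    (Measure.pi_le_pi_map_of_isLowerSet μ (by fun_prop) hdown (measurableSet_sum_le t)
      (isLowerSet_sum_le t))
  rw [integral_id_map_const_mul, hmean, div_mul_cancel₀ m₁ h₃.ne']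

/-- For fixed `n` and `t`, the supremum `p(m,t)` is non-increasing in `m` on `(0,1)`. -/
theorem stmt_4 (n : ℕ) (t : ℝ) (m₁ m₂ : ℝ)
    (h₁ : 0 < m₁) (h₂ : m₁ < 1) (h₃ : 0 < m₂) (h₄ : m₂ < 1) (h : m₁ ≤ m₂) :
    pSup n m₂ t ≤ pSup n m₁ t :=
  stmt_4_general n t m₁ m₂ h₁ h₃ h
end

section
/- Suppose μ is a probability measure on [0,1] with mean m whose support is contained in [a,b] with 0 < a and b < 1. Then there exists α > 1 and a probability measure μ* on [0,1] with mean m (the pushforward of μ under x ↦ m + α(x-m)) such that for all t < mn, P_{μ*}(S_n ≤ t) ≥ P_μ(S_n ≤ t). Consequently, the supremum p(m,t) is attained by a measure whose support contains 0 or 1. -/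
open MeasureTheory

/-- The (topological) support of a measure: points all of whose neighborhoods
have positive measure. -/
def measSupport (μ : Measure ℝ) : Set ℝ := {x | ∀ U ∈ nhds x, μ U ≠ 0}

/-!
Stretching a law around its mean `m` by a factor `α ≥ 1` keeps the mean, and turns `S_n` into
`n m + α (S_n - n m)`; below `n m` this only decreases the sum, so `P(S_n ≤ t)` can only grow
for `t ≤ n m`. The stretched law stays on `[0,1]` as long as the endpoints of the support do.

A maximiser of `P(S_n ≤ t)` over the laws on `[0,1]` with mean `m` exists: the probability
measures on `[0,1]` form a compact space for the weak topology (Prokhorov), the mean is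
continuous, and `ρ ↦ ρ^{⊗n}(F)` is upper semicontinuous for closed `F` (products are continuous,
and closed sets satisfy the portmanteau inequality). Stretching the maximiser as far as possible
pushes an endpoint of its support to `0` or `1`. This needs `m` to lie strictly inside the hull of
the support; otherwise the maximiser is the point mass at `m`, whose value `0` is beaten by the
two-point law on `{0, 1}`, whose value is at least `(1 - m)^n`.
-/

open Set Filter Topology unitInterval
open scoped ENNReal

noncomputable def probSumLE (n : ℕ) (t : ℝ) (ρ : Measure ℝ) : ℝ≥0∞ :=
  Measure.pi (fun _ : Fin n => ρ) {x | ∑ i, x i ≤ t}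

/-- The paper's `D_m`. -/
def meanClass (m : ℝ) : Set (Measure ℝ) :=
  {ρ | IsProbabilityMeasure ρ ∧ ρ (Icc 0 1)ᶜ = 0 ∧ ∫ x, x ∂ρ = m}

lemma pSup_eq_iSup (n : ℕ) (m t : ℝ) :
    pSup n m t = ⨆ ρ ∈ meanClass m, probSumLE n t ρ :=
  rfl

lemma le_pSup {n : ℕ} {m t : ℝ} {ρ : Measure ℝ} (hρ : ρ ∈ meanClass m) :
    probSumLE n t ρ ≤ pSup n m t := by
  rw [pSup_eq_iSup]
  exact le_biSup (probSumLE n t) hρ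

lemma pSup_le {n : ℕ} {m t : ℝ} {c : ℝ≥0∞} (h : ∀ ρ ∈ meanClass m, probSumLE n t ρ ≤ c) :
    pSup n m t ≤ c := by
  rw [pSup_eq_iSup]
  exact iSup₂_le h

lemma integrable_id_of_compl_Icc_null {ν : Measure ℝ} [IsFiniteMeasure ν] {a b : ℝ}
    (hν : ν (Icc a b)ᶜ = 0) : Integrable (fun x => x) ν :=
  (integrable_const (max |a| |b|)).mono' aestronglyMeasurable_id <| by
    filter_upwards [mem_ae_iff.2 hν] with x hx using abs_le_max_abs_abs hx.1 hx.2

lemma integral_id_mem_Icc {ν : Measure ℝ} [IsProbabilityMeasure ν] {a b : ℝ}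
    (hν : ν (Icc a b)ᶜ = 0) : ∫ x, x ∂ν ∈ Icc a b :=
  (convex_Icc a b).integral_mem isClosed_Icc (mem_ae_iff.2 hν)
    (integrable_id_of_compl_Icc_null hν)

lemma ae_eq_integral_or_integral_mem_Ioo {ν : Measure ℝ} [IsProbabilityMeasure ν] {a b : ℝ}
    (hν : ν (Icc a b)ᶜ = 0) : (∀ᵐ x ∂ν, x = ∫ x, x ∂ν) ∨ ∫ x, x ∂ν ∈ Ioo a b := by
  simpa [average_eq_integral, interior_Icc, EventuallyEq] using
    (strictConvex_Icc a b).ae_eq_const_or_average_mem_interior isClosed_Icc (mem_ae_iff.2 hν)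
      (integrable_id_of_compl_Icc_null hν)

def stretch (m α x : ℝ) : ℝ := m + α * (x - m)

lemma continuous_stretch (m α : ℝ) : Continuous (stretch m α) := by
  unfold stretch; fun_prop

lemma sum_stretch {ι : Type*} (s : Finset ι) (m α : ℝ) (x : ι → ℝ) :
    ∑ i ∈ s, stretch m α (x i) = s.card * m + α * (∑ i ∈ s, x i - s.card * m) := by
  simp only [stretch, Finset.sum_add_distrib, ← Finset.mul_sum, Finset.sum_sub_distrib,
    Finset.sum_const, nsmul_eq_mul]

lemma mapsTo_stretch_Icc {a b m α : ℝ} (hα : 0 ≤ α) (ha : α * (m - a) ≤ m)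
    (hb : α * (b - m) ≤ 1 - m) : MapsTo (stretch m α) (Icc a b) (Icc 0 1) := by
  intro x hx
  have h1 : α * (a - m) ≤ α * (x - m) := mul_le_mul_of_nonneg_left (by linarith [hx.1]) hα
  have h2 : α * (x - m) ≤ α * (b - m) := mul_le_mul_of_nonneg_left (by linarith [hx.2]) hα
  constructor <;> simp only [stretch] <;> linarith

lemma exists_stretch_to_endpoint {a b m : ℝ} (ha : 0 ≤ a) (ham : a < m) (hmb : m < b)
    (hb : b ≤ 1) : ∃ α, 1 ≤ α ∧ α * (m - a) ≤ m ∧ α * (b - m) ≤ 1 - m ∧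
      (stretch m α a = 0 ∨ stretch m α b = 1) := by
  have hma : 0 < m - a := by linarith
  have hbm : 0 < b - m := by linarith
  refine ⟨min (m / (m - a)) ((1 - m) / (b - m)), le_min ?_ ?_,
    (le_div_iff₀ hma).1 (min_le_left _ _), (le_div_iff₀ hbm).1 (min_le_right _ _), ?_⟩
  · rw [one_le_div hma]; linarith
  · rw [one_le_div hbm]; linarith
  · rcases min_choice (m / (m - a)) ((1 - m) / (b - m)) with h | h <;> simp only [h, stretch]
    · left; field_simp; ring
    · right; field_simp; ring

lemma map_stretch_mem_meanClass {ν : Measure ℝ} [IsProbabilityMeasure ν] {a b m α : ℝ}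
    (hν : ν (Icc a b)ᶜ = 0) (hmean : ∫ x, x ∂ν = m)
    (hmaps : MapsTo (stretch m α) (Icc a b) (Icc 0 1)) :
    ν.map (stretch m α) ∈ meanClass m := by
  have hmeas := (continuous_stretch m α).measurable
  refine ⟨Measure.isProbabilityMeasure_map hmeas.aemeasurable, ?_, ?_⟩
  · rw [Measure.map_apply hmeas measurableSet_Icc.compl]
    exact measure_mono_null (compl_subset_compl.2 hmaps.subset_preimage) hν
  · have hint := integrable_id_of_compl_Icc_null hν
    have hint' : Integrable (fun x => α * (x - m)) ν :=
      (hint.sub (integrable_const m)).const_mul α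
    rw [integral_map (f := fun x : ℝ => x) hmeas.aemeasurable aestronglyMeasurable_id]
    simp only [stretch]
    rw [integral_add (integrable_const m) hint', integral_const_mul,
      integral_sub hint (integrable_const m)]
    simp [hmean]

lemma probSumLE_le_map_stretch (n : ℕ) {m t α : ℝ} (ν : Measure ℝ) [IsFiniteMeasure ν]
    (hα : 1 ≤ α) (ht : t ≤ m * n) :
    probSumLE n t ν ≤ probSumLE n t (ν.map (stretch m α)) := by
  have hpres := measurePreserving_pi (fun _ : Fin n => ν) (fun _ => ν.map (stretch m α))
    fun _ => ⟨(continuous_stretch m α).measurable, rfl⟩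
  rw [probSumLE, probSumLE, ← hpres.measure_preimage
    (measurableSet_le (by fun_prop) measurable_const).nullMeasurableSet]
  refine measure_mono fun x (hx : ∑ i, x i ≤ t) => ?_
  change ∑ i, stretch m α (x i) ≤ t
  rw [sum_stretch, Finset.card_univ, Fintype.card_fin]
  nlinarith

lemma probSumLE_eq_zero_of_ae_eq_const (n : ℕ) {t c : ℝ} (ν : Measure ℝ)
    [IsProbabilityMeasure ν] (hν : ∀ᵐ x ∂ν, x = c) (ht : t < c * n) : probSumLE n t ν = 0 := by
  have hall : ∀ᵐ x ∂Measure.pi (fun _ : Fin n => ν), ∀ i, x i = c :=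
    eventually_all.2 fun i => (Measure.tendsto_eval_ae_ae (μ := fun _ => ν) (i := i)).eventually hν
  refine measure_eq_zero_iff_ae_notMem.2 (hall.mono fun x hx (hle : ∑ i, x i ≤ t) => ?_)
  simp only [hx, Finset.sum_const, Finset.card_univ, Fintype.card_fin, nsmul_eq_mul] at hle
  linarith

noncomputable def twoPoint (m : ℝ) : Measure ℝ :=
  ENNReal.ofReal (1 - m) • Measure.dirac 0 + ENNReal.ofReal m • Measure.dirac 1

instance isFiniteMeasure_twoPoint (m : ℝ) : IsFiniteMeasure (twoPoint m) :=
  ⟨by simp [twoPoint, ENNReal.add_lt_top]⟩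

lemma twoPoint_mem_meanClass {m : ℝ} (hm : m ∈ I) : twoPoint m ∈ meanClass m := by
  have h1m : 0 ≤ 1 - m := by linarith [hm.2]
  have hprob : IsProbabilityMeasure (twoPoint m) :=
    ⟨by simp [twoPoint, ← ENNReal.ofReal_add h1m hm.1]⟩
  have h01 : twoPoint m (Icc 0 1)ᶜ = 0 := by simp [twoPoint]
  refine ⟨hprob, h01, ?_⟩
  have hint := integrable_id_of_compl_Icc_null h01
  rw [twoPoint] at hint ⊢
  rw [integral_add_measure hint.left_of_add_measure hint.right_of_add_measure,
    integral_smul_measure, integral_smul_measure, integral_dirac, integral_dirac]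
  simp [ENNReal.toReal_ofReal, hm.1, h1m]

lemma pow_le_probSumLE_twoPoint (n : ℕ) {m t : ℝ} (ht : 0 ≤ t) :
    ENNReal.ofReal (1 - m) ^ n ≤ probSumLE n t (twoPoint m) := by
  have hzero : univ.pi (fun _ : Fin n => ({0} : Set ℝ)) ⊆ {x | ∑ i, x i ≤ t} := fun x hx => by
    simp_all
  calc ENNReal.ofReal (1 - m) ^ n
      = Measure.pi (fun _ : Fin n => twoPoint m) (univ.pi fun _ => {0}) := by
        rw [Measure.pi_pi]; simp [twoPoint]
    _ ≤ probSumLE n t (twoPoint m) := measure_mono hzero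

lemma pSup_pos (n : ℕ) {m t : ℝ} (hm0 : 0 ≤ m) (hm1 : m < 1) (ht : 0 ≤ t) :
    0 < pSup n m t :=
  calc 0 < ENNReal.ofReal (1 - m) ^ n := ENNReal.pow_pos (ENNReal.ofReal_pos.2 (by linarith)) n
    _ ≤ probSumLE n t (twoPoint m) := pow_le_probSumLE_twoPoint n ht
    _ ≤ pSup n m t := le_pSup (twoPoint_mem_meanClass ⟨hm0, hm1.le⟩)

namespace MeasureTheory.ProbabilityMeasure

variable {Ω : Type*} [MeasurableSpace Ω] [TopologicalSpace Ω] [OpensMeasurableSpace Ω]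

lemma upperSemicontinuous_measure_of_isClosed [HasOuterApproxClosed Ω] {F : Set Ω}
    (hF : IsClosed F) : UpperSemicontinuous fun ρ : ProbabilityMeasure Ω => (ρ : Measure Ω) F :=
  upperSemicontinuous_iff_limsup_le.2 fun _ => limsup_measure_closed_le_of_tendsto tendsto_id hF

lemma upperSemicontinuous_pi_measure_of_isClosed [SecondCountableTopology Ω]
    [TopologicalSpace.PseudoMetrizableSpace Ω] {ι : Type*} [Fintype ι] {F : Set (ι → Ω)}
    (hF : IsClosed F) :
    UpperSemicontinuous fun ρ : ProbabilityMeasure Ω =>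
      Measure.pi (fun _ : ι => (ρ : Measure Ω)) F :=
  (upperSemicontinuous_measure_of_isClosed hF).comp
    (continuous_pi.comp (_root_.continuous_pi fun _ => continuous_id))

end MeasureTheory.ProbabilityMeasure

lemma probSumLE_map_coe (n : ℕ) (t : ℝ) (ρ : Measure I) [IsFiniteMeasure ρ] :
    probSumLE n t (ρ.map (↑)) = Measure.pi (fun _ : Fin n => ρ) {x | ∑ i, (x i : ℝ) ≤ t} := by
  rw [probSumLE, ← Measure.pi_map_pi (fun _ => measurable_subtype_coe.aemeasurable),
    Measure.map_apply (by fun_prop) (measurableSet_le (by fun_prop) (by fun_prop))]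
  rfl

lemma integral_id_map_coe (ρ : Measure I) : ∫ x, x ∂(ρ.map (↑)) = ∫ x, (x : ℝ) ∂ρ :=
  integral_map measurable_subtype_coe.aemeasurable aestronglyMeasurable_id

lemma map_coe_mem_meanClass {m : ℝ} (ρ : Measure I) [IsProbabilityMeasure ρ]
    (hρ : ∫ x, (x : ℝ) ∂ρ = m) : ρ.map (↑) ∈ meanClass m := by
  refine ⟨Measure.isProbabilityMeasure_map measurable_subtype_coe.aemeasurable, ?_,
    (integral_id_map_coe ρ).trans hρ⟩
  rw [Measure.map_apply measurable_subtype_coe measurableSet_Icc.compl]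
  simp

lemma exists_map_coe_eq {ν : Measure ℝ} [IsProbabilityMeasure ν] (hν : ν (Icc 0 1)ᶜ = 0) :
    ∃ ρ : ProbabilityMeasure I, (ρ : Measure I).map (↑) = ν := by
  have hmap : (ν.comap ((↑) : I → ℝ)).map (↑) = ν := by
    rw [map_comap_subtype_coe measurableSet_Icc, Measure.restrict_eq_self_of_ae_mem]
    exact mem_ae_iff.2 hν
  have huniv := congrArg (fun μ => μ univ) hmap
  simp only [Measure.map_apply measurable_subtype_coe MeasurableSet.univ, preimage_univ,
    measure_univ] at huniv
  exact ⟨⟨_, ⟨huniv⟩⟩, hmap⟩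

lemma exists_mem_meanClass_probSumLE_eq_pSup (n : ℕ) (t : ℝ) {m : ℝ} (hm : m ∈ I) :
    ∃ ν ∈ meanClass m, probSumLE n t ν = pSup n m t := by
  set S : Set (ProbabilityMeasure I) := {ρ | ∫ x, (x : ℝ) ∂(ρ : Measure I) = m}
  have hS : IsCompact S :=
    (isClosed_eq (ProbabilityMeasure.continuous_integral_continuousMap
      (⟨(↑), continuous_subtype_val⟩ : C(I, ℝ))) continuous_const).isCompact
  have hSne : S.Nonempty := ⟨⟨Measure.dirac ⟨m, hm⟩, inferInstance⟩, integral_dirac _ _⟩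
  have husc : UpperSemicontinuous fun ρ : ProbabilityMeasure I =>
      probSumLE n t ((ρ : Measure I).map (↑)) := by
    simp_rw [probSumLE_map_coe]
    exact ProbabilityMeasure.upperSemicontinuous_pi_measure_of_isClosed
      (isClosed_le (by fun_prop) continuous_const)
  obtain ⟨ρ, hρS, hρmax⟩ := (husc.upperSemicontinuousOn S).exists_isMaxOn hSne hS
  have hρ := map_coe_mem_meanClass ρ hρS
  refine ⟨_, hρ, le_antisymm (le_pSup hρ) (pSup_le fun ν hν => ?_)⟩
  have := hν.1
  obtain ⟨ρ', rfl⟩ := exists_map_coe_eq hν.2.1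
  exact hρmax ((integral_id_map_coe _).symm.trans hν.2.2)

lemma measSupport_eq_support (ν : Measure ℝ) : measSupport ν = ν.support := by
  ext x
  simp [measSupport, Measure.mem_support_iff_forall, pos_iff_ne_zero]

lemma MeasureTheory.Measure.mem_support_map {X Y : Type*} [TopologicalSpace X]
    [MeasurableSpace X] [OpensMeasurableSpace X] [TopologicalSpace Y] [MeasurableSpace Y]
    [BorelSpace Y] {μ : Measure X} {f : X → Y} (hf : Continuous f) {x : X}
    (hx : x ∈ μ.support) : f x ∈ (μ.map f).support :=
  (mem_support_iff_forall _).2 fun U hU =>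
    ((mem_support_iff_forall x).1 hx _ (hf.continuousAt.preimage_mem_nhds hU)).trans_le
      (le_map_apply hf.aemeasurable U)

lemma exists_maximizer_zero_or_one_mem_support {n : ℕ} {m t : ℝ} (hm0 : 0 ≤ m)
    (hm1 : m < 1) (ht0 : 0 ≤ t) (htn : t < m * n) :
    ∃ ν ∈ meanClass m, probSumLE n t ν = pSup n m t ∧ (0 ∈ ν.support ∨ 1 ∈ ν.support) := by
  obtain ⟨ν, ⟨hprob, hν01, hmean⟩, hmax⟩ :=
    exists_mem_meanClass_probSumLE_eq_pSup n t ⟨hm0, hm1.le⟩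
  have hsupp : ν.support ⊆ Icc 0 1 :=
    Measure.support_subset_of_isClosed isClosed_Icc (mem_ae_iff.2 hν01)
  have hne : ν.support.Nonempty := Measure.nonempty_support (IsProbabilityMeasure.ne_zero ν)
  have hbdd : BddBelow ν.support ∧ BddAbove ν.support :=
    ⟨bddBelow_Icc.mono hsupp, bddAbove_Icc.mono hsupp⟩
  set a := sInf ν.support
  set b := sSup ν.support
  have ha : a ∈ ν.support := Measure.isClosed_support.csInf_mem hne hbdd.1
  have hb : b ∈ ν.support := Measure.isClosed_support.csSup_mem hne hbdd.2
  have hab : ν (Icc a b)ᶜ = 0 := measure_mono_null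
    (compl_subset_compl.2 fun x hx => ⟨csInf_le hbdd.1 hx, le_csSup hbdd.2 hx⟩)
    Measure.measure_compl_support
  obtain hconst | ⟨ham, hmb⟩ := hmean ▸ ae_eq_integral_or_integral_mem_Ioo hab
  · have hzero := probSumLE_eq_zero_of_ae_eq_const n ν hconst htn
    exact absurd (hmax ▸ hzero) (pSup_pos n hm0 hm1 ht0).ne'
  obtain ⟨α, hα, hαa, hαb, hend⟩ :=
    exists_stretch_to_endpoint (hsupp ha).1 ham hmb (hsupp hb).2
  have hstretch :=
    map_stretch_mem_meanClass hab hmean (mapsTo_stretch_Icc (by linarith) hαa hαb)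
  refine ⟨_, hstretch, le_antisymm (le_pSup hstretch)
    (hmax ▸ probSumLE_le_map_stretch n ν hα htn.le), ?_⟩
  rcases hend with h | h
  · exact .inl (h ▸ Measure.mem_support_map (continuous_stretch m α) ha)
  · exact .inr (h ▸ Measure.mem_support_map (continuous_stretch m α) hb)

theorem stmt_6_general (n : ℕ) (m : ℝ) (hm0 : 0 < m) (hm1 : m < 1)
    (μ : Measure ℝ) [IsProbabilityMeasure μ]
    (a b : ℝ) (ha : 0 < a) (hb : b < 1)
    (hsupp : μ (Set.Icc a b)ᶜ = 0) (hmean : (∫ x, x ∂μ) = m) :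
    (∃ α : ℝ, 1 < α ∧
      (IsProbabilityMeasure (μ.map (fun x => m + α * (x - m))) ∧
        (μ.map (fun x => m + α * (x - m))) (Set.Icc (0:ℝ) 1)ᶜ = 0 ∧
        (∫ x, x ∂(μ.map (fun x => m + α * (x - m)))) = m ∧
        ∀ t : ℝ, t < m * n →
          Measure.pi (fun _ : Fin n => μ) {x | ∑ i, x i ≤ t}
            ≤ Measure.pi (fun _ : Fin n => μ.map (fun x => m + α * (x - m)))
                {x | ∑ i, x i ≤ t})) ∧
    (∀ t : ℝ, 0 ≤ t → t < m * n →
      ∃ ν : Measure ℝ, IsProbabilityMeasure ν ∧ ν (Set.Icc (0:ℝ) 1)ᶜ = 0 ∧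
        (∫ x, x ∂ν) = m ∧
        Measure.pi (fun _ : Fin n => ν) {x | ∑ i, x i ≤ t} = pSup n m t ∧
        ((0:ℝ) ∈ measSupport ν ∨ (1:ℝ) ∈ measSupport ν)) := by
  have hm : m ∈ Icc a b := hmean ▸ integral_id_mem_Icc hsupp
  have hε : 0 < min a (1 - b) := lt_min ha (by linarith)
  refine ⟨⟨1 + min a (1 - b), by linarith, ?_⟩, fun t ht0 htn => ?_⟩
  · have hmaps : MapsTo (stretch m (1 + min a (1 - b))) (Icc a b) (Icc 0 1) :=
      mapsTo_stretch_Icc (by linarith)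
        (by nlinarith [min_le_left a (1 - b), hm.1, hm.2])
        (by nlinarith [min_le_right a (1 - b), hm.1, hm.2])
    obtain ⟨hprob, h01, hmean'⟩ := map_stretch_mem_meanClass hsupp hmean hmaps
    exact ⟨hprob, h01, hmean', fun t ht => probSumLE_le_map_stretch n μ (by linarith) ht.le⟩
  · obtain ⟨ν, ⟨hprob, h01, hmean'⟩, hmax, hend⟩ :=
      exists_maximizer_zero_or_one_mem_support hm0.le hm1 ht0 htn
    exact ⟨ν, hprob, h01, hmean', hmax, by simpa only [measSupport_eq_support] using hend⟩

/-- If `μ` is a probability measure on `[0,1]` with mean `m` supported in `[a,b]` with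
`0 < a` and `b < 1`, then rescaling around `m` by some `α > 1` gives a measure `μ*` on
`[0,1]` with mean `m` such that `P_{μ*}(S_n ≤ t) ≥ P_μ(S_n ≤ t)` for all `t < mn`.
Consequently, the supremum `p(m,t)` is attained by a measure whose support contains
`0` or `1`. -/
theorem stmt_6 (n : ℕ) (hn : 1 ≤ n) (m : ℝ) (hm0 : 0 < m) (hm1 : m < 1)
    (μ : Measure ℝ) [IsProbabilityMeasure μ]
    (a b : ℝ) (ha : 0 < a) (hab : a ≤ b) (hb : b < 1)
    (hsupp : μ (Set.Icc a b)ᶜ = 0) (hmean : (∫ x, x ∂μ) = m) :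
    (∃ α : ℝ, 1 < α ∧
      (IsProbabilityMeasure (μ.map (fun x => m + α * (x - m))) ∧
        (μ.map (fun x => m + α * (x - m))) (Set.Icc (0:ℝ) 1)ᶜ = 0 ∧
        (∫ x, x ∂(μ.map (fun x => m + α * (x - m)))) = m ∧
        ∀ t : ℝ, t < m * n →
          Measure.pi (fun _ : Fin n => μ) {x | ∑ i, x i ≤ t}
            ≤ Measure.pi (fun _ : Fin n => μ.map (fun x => m + α * (x - m)))
                {x | ∑ i, x i ≤ t})) ∧
    (∀ t : ℝ, 0 ≤ t → t < m * n →
      ∃ ν : Measure ℝ, IsProbabilityMeasure ν ∧ ν (Set.Icc (0:ℝ) 1)ᶜ = 0 ∧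
        (∫ x, x ∂ν) = m ∧
        Measure.pi (fun _ : Fin n => ν) {x | ∑ i, x i ≤ t} = pSup n m t ∧
        ((0:ℝ) ∈ measSupport ν ∨ (1:ℝ) ∈ measSupport ν)) :=
  stmt_6_general n m hm0 hm1 μ a b ha hb hsupp hmean
end

section
/- Fix 0 ≤ t < 2m < 2. Let π be the two-point probability measure on {t/2, 1} with π({1}) = (m - t/2)/(1 - t/2). Then π is a probability measure on [0,1] with mean m and, for X₁, X₂ i.i.d. with law π, P(X₁ + X₂ ≤ t) = ((1-m)/(1-t/2))². -/
open MeasureTheory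

open scoped ENNReal

section TwoPointMeasure

variable {α : Type*} [MeasurableSpace α] (x y : α)

theorem isProbabilityMeasure_smul_dirac_add_smul_dirac {a b : ℝ≥0∞} (hab : a + b = 1) :
    IsProbabilityMeasure (a • Measure.dirac x + b • Measure.dirac y) :=
  ⟨by simp [hab]⟩

variable [MeasurableSingletonClass α]

theorem smul_dirac_add_smul_dirac_apply (a b : ℝ≥0∞) (s : Set α) :
    (a • Measure.dirac x + b • Measure.dirac y) s
      = a * s.indicator 1 x + b * s.indicator 1 y := by
  simp [Measure.dirac_apply]

theorem lintegral_smul_dirac_add_smul_dirac (a b : ℝ≥0∞) (f : α → ℝ≥0∞) :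
    ∫⁻ z, f z ∂(a • Measure.dirac x + b • Measure.dirac y) = a * f x + b * f y := by
  rw [lintegral_add_measure, lintegral_smul_measure, lintegral_smul_measure,
    lintegral_dirac, lintegral_dirac, smul_eq_mul, smul_eq_mul]

theorem integral_ofReal_smul_dirac_add_ofReal_smul_dirac {E : Type*} [NormedAddCommGroup E]
    [NormedSpace ℝ E] [CompleteSpace E] {a b : ℝ} (ha : 0 ≤ a) (hb : 0 ≤ b) (f : α → E) :
    ∫ z, f z ∂(ENNReal.ofReal a • Measure.dirac x + ENNReal.ofReal b • Measure.dirac y)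
      = a • f x + b • f y := by
  have hint : ∀ z, Integrable f (Measure.dirac z) := fun z ↦ integrable_dirac enorm_lt_top
  rw [integral_add_measure ((hint x).smul_measure ENNReal.ofReal_ne_top)
      ((hint y).smul_measure ENNReal.ofReal_ne_top),
    integral_smul_measure, integral_smul_measure, integral_dirac, integral_dirac,
    ENNReal.toReal_ofReal ha, ENNReal.toReal_ofReal hb]

theorem smul_dirac_add_smul_dirac_prod_apply {β : Type*} [MeasurableSpace β] (a b : ℝ≥0∞)
    (μ : Measure β) [SFinite μ] {s : Set (α × β)} (hs : MeasurableSet s) :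
    ((a • Measure.dirac x + b • Measure.dirac y).prod μ) s
      = a * μ (Prod.mk x ⁻¹' s) + b * μ (Prod.mk y ⁻¹' s) := by
  rw [Measure.prod_apply hs, lintegral_smul_dirac_add_smul_dirac]

end TwoPointMeasure

theorem stmt_10_general (m t : ℝ) (hm1 : m < 1) (ht0 : 0 ≤ t) (ht : t < 2 * m)
    (π : Measure ℝ)
    (hπ : π = ENNReal.ofReal ((1 - m) / (1 - t / 2)) • Measure.dirac (t / 2)
            + ENNReal.ofReal ((m - t / 2) / (1 - t / 2)) • Measure.dirac (1:ℝ)) :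
    IsProbabilityMeasure π ∧ π (Set.Icc (0:ℝ) 1)ᶜ = 0 ∧ (∫ x, x ∂π) = m ∧
      (π.prod π) {p : ℝ × ℝ | p.1 + p.2 ≤ t}
        = ENNReal.ofReal (((1 - m) / (1 - t / 2)) ^ 2) := by
  have hden : 0 < 1 - t / 2 := by linarith
  set a := (1 - m) / (1 - t / 2)
  set b := (m - t / 2) / (1 - t / 2)
  have ha : 0 ≤ a := div_nonneg (by linarith) hden.le
  have hb : 0 ≤ b := div_nonneg (by linarith) hden.le
  have hab : a + b = 1 := by
    rw [← add_div, div_eq_one_iff_eq hden.ne']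
    ring
  have hS : MeasurableSet {p : ℝ × ℝ | p.1 + p.2 ≤ t} :=
    measurableSet_le (by fun_prop) measurable_const
  subst hπ
  refine ⟨isProbabilityMeasure_smul_dirac_add_smul_dirac _ _ ?_, ?_, ?_, ?_⟩
  · rw [← ENNReal.ofReal_add ha hb, hab, ENNReal.ofReal_one]
  · have hx : t / 2 ∈ Set.Icc (0:ℝ) 1 := ⟨by linarith, by linarith⟩
    have hy : (1:ℝ) ∈ Set.Icc (0:ℝ) 1 := ⟨zero_le_one, le_rfl⟩
    simp [smul_dirac_add_smul_dirac_apply, hx, hy]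
  · rw [integral_ofReal_smul_dirac_add_ofReal_smul_dirac _ _ ha hb, smul_eq_mul, smul_eq_mul,
      div_mul_eq_mul_div, mul_one, ← add_div, div_eq_iff hden.ne']
    ring
  -- Only the atom `(t/2, t/2)` lies in the half-plane, since `1 + t/2 > t`.
  · have hxx : t / 2 + t / 2 ≤ t := by linarith
    have hxy : ¬ t / 2 + 1 ≤ t := by linarith
    have hyx : ¬ (1:ℝ) + t / 2 ≤ t := by linarith
    have hyy : ¬ (1:ℝ) + 1 ≤ t := by linarith
    simp only [smul_dirac_add_smul_dirac_prod_apply _ _ _ _ _ hS,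
      smul_dirac_add_smul_dirac_apply, Set.preimage_ofPred_eq, Set.indicator_apply,
      Set.mem_ofPred_eq, hxx, hxy, hyx, hyy, if_true, if_false, Pi.one_apply, mul_one,
      mul_zero, add_zero]
    rw [← ENNReal.ofReal_mul ha, sq]

/-- The two-point measure on `{t/2, 1}` with `π({1}) = (m - t/2)/(1 - t/2)` is a
probability measure on `[0,1]` with mean `m` and
`P(X₁ + X₂ ≤ t) = ((1-m)/(1-t/2))²`. -/
theorem stmt_10 (m t : ℝ) (hm0 : 0 < m) (hm1 : m < 1) (ht0 : 0 ≤ t) (ht : t < 2 * m)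
    (π : Measure ℝ)
    (hπ : π = ENNReal.ofReal ((1 - m) / (1 - t / 2)) • Measure.dirac (t / 2)
            + ENNReal.ofReal ((m - t / 2) / (1 - t / 2)) • Measure.dirac (1:ℝ)) :
    IsProbabilityMeasure π ∧ π (Set.Icc (0:ℝ) 1)ᶜ = 0 ∧ (∫ x, x ∂π) = m ∧
      (π.prod π) {p : ℝ × ℝ | p.1 + p.2 ≤ t}
        = ENNReal.ofReal (((1 - m) / (1 - t / 2)) ^ 2) :=
  stmt_10_general m t hm1 ht0 ht π hπ
end

section
/- Fix 0 ≤ t - 1 ≤ s ≤ t/2 < 1 and 0 < m < 1, and suppose (1-m)(1-s) < (1-t+s)(1+t-3s). Define λ = (1-m)/((1-t+s)(1+t-3s)) and the three-point measure π on {s, t-s, 1} with π({s}) = λ(1-t+s), π({t-s}) = λ(t-2s), π({1}) = 1 - λ(1-s). Then π is a probability measure with mean m, and for X₁, X₂ i.i.d. with law π, P(X₁ + X₂ ≤ t) = (1-m)²/((1-t+s)(1+t-3s)). -/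
/-!
`π` is a finite combination of Dirac masses, so its total mass, its mean and the law of
`X₁ + X₂` are finite sums over the atoms. Feasibility forces `t - 1 < s`, so with `s ≤ t / 2`
the only pairs of atoms with sum at most `t` are `(s, s)`, `(s, t - s)` and `(t - s, s)` (and `(t - s, t - s)` when `t = 2s`,
where the atom `t - s` carries no mass), so `P(X₁ + X₂ ≤ t) = λ²(1-t+s)(1+t-3s) = λ(1-m)`.
The mean is `m` by the same identity `λ(1-t+s)(1+t-3s) = 1 - m`.
-/

open MeasureTheory
open scoped ENNReal

section ThreePoint

variable {α : Type*} [MeasurableSpace α] (p₁ p₂ p₃ : ℝ) (a₁ a₂ a₃ : α)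

noncomputable def threePointMeasure : Measure α :=
  ENNReal.ofReal p₁ • Measure.dirac a₁ + ENNReal.ofReal p₂ • Measure.dirac a₂
    + ENNReal.ofReal p₃ • Measure.dirac a₃

instance : IsFiniteMeasure (threePointMeasure p₁ p₂ p₃ a₁ a₂ a₃) := by
  constructor
  simp [threePointMeasure]

variable {p₁ p₂ p₃}

lemma isProbabilityMeasure_threePointMeasure (h₁ : 0 ≤ p₁) (h₂ : 0 ≤ p₂) (h₃ : 0 ≤ p₃)
    (hsum : p₁ + p₂ + p₃ = 1) : IsProbabilityMeasure (threePointMeasure p₁ p₂ p₃ a₁ a₂ a₃) := by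
  constructor
  simp only [threePointMeasure, Measure.add_apply, Measure.smul_apply, measure_univ, smul_eq_mul,
    mul_one]
  rw [← ENNReal.ofReal_add h₁ h₂, ← ENNReal.ofReal_add (by positivity) h₃, hsum, ENNReal.ofReal_one]

lemma lintegral_threePointMeasure [MeasurableSingletonClass α] (f : α → ℝ≥0∞) :
    ∫⁻ x, f x ∂threePointMeasure p₁ p₂ p₃ a₁ a₂ a₃
      = ENNReal.ofReal p₁ * f a₁ + ENNReal.ofReal p₂ * f a₂ + ENNReal.ofReal p₃ * f a₃ := by
  simp only [threePointMeasure, lintegral_add_measure, lintegral_smul_measure, lintegral_dirac,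
    smul_eq_mul]

lemma integral_threePointMeasure [MeasurableSingletonClass α] {E : Type*} [NormedAddCommGroup E]
    [NormedSpace ℝ E] [CompleteSpace E] (h₁ : 0 ≤ p₁) (h₂ : 0 ≤ p₂) (h₃ : 0 ≤ p₃) (f : α → E) :
    ∫ x, f x ∂threePointMeasure p₁ p₂ p₃ a₁ a₂ a₃ = p₁ • f a₁ + p₂ • f a₂ + p₃ • f a₃ := by
  have hint : ∀ (p : ℝ) (a : α), Integrable f (ENNReal.ofReal p • Measure.dirac a) := fun p a =>
    (integrable_dirac (by simp)).smul_measure ENNReal.ofReal_ne_top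
  rw [threePointMeasure, integral_add_measure ((hint _ _).add_measure (hint _ _)) (hint _ _),
    integral_add_measure (hint _ _) (hint _ _)]
  simp only [integral_smul_measure, integral_dirac, ENNReal.toReal_ofReal h₁,
    ENNReal.toReal_ofReal h₂, ENNReal.toReal_ofReal h₃]

lemma measureReal_threePointMeasure [MeasurableSingletonClass α] (h₁ : 0 ≤ p₁) (h₂ : 0 ≤ p₂)
    (h₃ : 0 ≤ p₃) (S : Set α) :
    (threePointMeasure p₁ p₂ p₃ a₁ a₂ a₃).real S
      = p₁ * S.indicator 1 a₁ + p₂ * S.indicator 1 a₂ + p₃ * S.indicator 1 a₃ := by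
  have hdirac : ∀ a : α, (Measure.dirac a).real S = S.indicator 1 a := fun a => by
    by_cases ha : a ∈ S <;> simp [Measure.real, Measure.dirac_apply, ha]
  have : ∀ (p : ℝ) (a : α), IsFiniteMeasure (ENNReal.ofReal p • Measure.dirac a) := fun _ a =>
    (Measure.dirac a).smul_finite ENNReal.ofReal_ne_top
  rw [threePointMeasure, measureReal_add_apply, measureReal_add_apply]
  simp only [measureReal_ennreal_smul_apply, hdirac,
    ENNReal.toReal_ofReal h₁, ENNReal.toReal_ofReal h₂, ENNReal.toReal_ofReal h₃]

lemma measureReal_threePointMeasure_prod [MeasurableSingletonClass α] {β : Type*}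
    [MeasurableSpace β] (h₁ : 0 ≤ p₁) (h₂ : 0 ≤ p₂) (h₃ : 0 ≤ p₃) (ν : Measure β)
    [IsFiniteMeasure ν] {S : Set (α × β)} (hS : MeasurableSet S) :
    ((threePointMeasure p₁ p₂ p₃ a₁ a₂ a₃).prod ν).real S
      = p₁ * ν.real (Prod.mk a₁ ⁻¹' S) + p₂ * ν.real (Prod.mk a₂ ⁻¹' S)
        + p₃ * ν.real (Prod.mk a₃ ⁻¹' S) := by
  rw [Measure.real, Measure.prod_apply hS, lintegral_threePointMeasure,
    ENNReal.toReal_add (by finiteness) (by finiteness),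
    ENNReal.toReal_add (by finiteness) (by finiteness)]
  simp only [ENNReal.toReal_mul, ENNReal.toReal_ofReal h₁, ENNReal.toReal_ofReal h₂,
    ENNReal.toReal_ofReal h₃, Measure.real]

end ThreePoint

lemma measureReal_prod_threePointMeasure_sum_le {s t p₁ p₂ p₃ : ℝ} (h₁ : 0 ≤ p₁) (h₂ : 0 ≤ p₂)
    (h₃ : 0 ≤ p₃) (hs : s ≤ t / 2) (hst : t - 1 < s) (hp₂ : t = 2 * s → p₂ = 0) :
    ((threePointMeasure p₁ p₂ p₃ s (t - s) 1).prod (threePointMeasure p₁ p₂ p₃ s (t - s) 1)).real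
      {p : ℝ × ℝ | p.1 + p.2 ≤ t} = p₁ * (p₁ + 2 * p₂) := by
  rw [measureReal_threePointMeasure_prod _ _ _ h₁ h₂ h₃ _
    (measurableSet_le (by fun_prop) (by fun_prop))]
  simp only [Set.preimage_ofPred_eq, measureReal_threePointMeasure _ _ _ h₁ h₂ h₃,
    Set.indicator_apply, Set.mem_ofPred_eq, Pi.one_apply]
  -- `(t - s) + (t - s) ≤ t` forces `t = 2 * s`, where the mass at `t - s` vanishes
  have hmid : p₂ * (if t - s + (t - s) ≤ t then (1 : ℝ) else 0) = 0 := by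
    split_ifs with h
    · rw [hp₂ (by linarith), zero_mul]
    · rw [mul_zero]
  simp only [show s + s ≤ t by linarith, show s + (t - s) ≤ t by linarith,
    show t - s + s ≤ t by linarith, not_le.2 (show t < s + 1 by linarith),
    not_le.2 (show t < t - s + 1 by linarith), not_le.2 (show t < 1 + s by linarith),
    not_le.2 (show t < 1 + (t - s) by linarith), not_le.2 (show t < 1 + 1 by linarith),
    if_true, if_false]
  linear_combination p₂ * hmid

section ThreePointSolution

variable {s t m lam : ℝ}

lemma one_sub_add_pos_of_feasible (hs : s ≤ t / 2) (ht2 : t / 2 < 1) (hm1 : m < 1)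
    (hfeas : (1 - m) * (1 - s) < (1 - t + s) * (1 + t - 3 * s)) : 0 < 1 - t + s := by
  have : 0 < (1 - m) * (1 - s) := mul_pos (by linarith) (by linarith)
  nlinarith

lemma weights_nonneg_of_feasible (hs : s ≤ t / 2) (ht2 : t / 2 < 1) (hm1 : m < 1)
    (hfeas : (1 - m) * (1 - s) < (1 - t + s) * (1 + t - 3 * s))
    (hlam : lam = (1 - m) / ((1 - t + s) * (1 + t - 3 * s))) :
    0 ≤ lam * (1 - t + s) ∧ 0 ≤ lam * (t - 2 * s) ∧ 0 ≤ 1 - lam * (1 - s) := by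
  have hA := one_sub_add_pos_of_feasible hs ht2 hm1 hfeas
  have hB : 0 < 1 + t - 3 * s := by linarith
  have hlam0 : 0 ≤ lam := hlam ▸ div_nonneg (by linarith) (by positivity)
  have hlam1 : lam * (1 - s) < 1 := by
    rwa [hlam, div_mul_eq_mul_div, div_lt_one (by positivity)]
  exact ⟨by positivity, mul_nonneg hlam0 (by linarith), by linarith⟩

end ThreePointSolution

theorem stmt_17_general (s t m : ℝ) (hs0 : 0 ≤ s) (hs : s ≤ t / 2)
    (ht2 : t / 2 < 1) (hm1 : m < 1)
    (hfeas : (1 - m) * (1 - s) < (1 - t + s) * (1 + t - 3 * s))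
    (lam : ℝ) (hlam : lam = (1 - m) / ((1 - t + s) * (1 + t - 3 * s)))
    (π : Measure ℝ)
    (hπ : π = ENNReal.ofReal (lam * (1 - t + s)) • Measure.dirac s
            + ENNReal.ofReal (lam * (t - 2 * s)) • Measure.dirac (t - s)
            + ENNReal.ofReal (1 - lam * (1 - s)) • Measure.dirac (1:ℝ)) :
    IsProbabilityMeasure π ∧ π (Set.Icc (0:ℝ) 1)ᶜ = 0 ∧ (∫ x, x ∂π) = m ∧
      (π.prod π) {p : ℝ × ℝ | p.1 + p.2 ≤ t}
        = ENNReal.ofReal ((1 - m) ^ 2 / ((1 - t + s) * (1 + t - 3 * s))) := by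
  have hA := one_sub_add_pos_of_feasible hs ht2 hm1 hfeas
  have hlamAB : lam * ((1 - t + s) * (1 + t - 3 * s)) = 1 - m := by
    rw [hlam, div_mul_cancel₀ _ (mul_pos hA (by linarith)).ne']
  obtain ⟨h₁, h₂, h₃⟩ := weights_nonneg_of_feasible hs ht2 hm1 hfeas hlam
  change π = threePointMeasure _ _ _ s (t - s) 1 at hπ
  subst hπ
  have hprob := isProbabilityMeasure_threePointMeasure s (t - s) 1 h₁ h₂ h₃ (by ring)
  refine ⟨hprob, ?_, ?_, ?_⟩
  · rw [← measureReal_eq_zero_iff, measureReal_threePointMeasure _ _ _ h₁ h₂ h₃]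
    simp [hs0, show s ≤ 1 by linarith, show 0 ≤ t - s by linarith, show t - s ≤ 1 by linarith]
  · rw [integral_threePointMeasure _ _ _ h₁ h₂ h₃]
    simp only [smul_eq_mul]
    linear_combination -hlamAB
  · rw [← ofReal_measureReal, measureReal_prod_threePointMeasure_sum_le h₁ h₂ h₃ hs
      (by linarith) (fun h => by rw [h, sub_self, mul_zero])]
    congr 1
    linear_combination lam * hlamAB + (1 - m) * hlam

/-- The candidate three-point solution on `{s, t-s, 1}`: under the feasibility condition
`(1-m)(1-s) < (1-t+s)(1+t-3s)`, with `λ = (1-m)/((1-t+s)(1+t-3s))`, the measure with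
masses `λ(1-t+s)` at `s`, `λ(t-2s)` at `t-s` and `1-λ(1-s)` at `1` is a probability
measure with mean `m`, and `P(X₁+X₂ ≤ t) = (1-m)²/((1-t+s)(1+t-3s))`. -/
theorem stmt_17 (s t m : ℝ) (hs0 : 0 ≤ s) (hst1 : t - 1 ≤ s) (hs : s ≤ t / 2)
    (ht2 : t / 2 < 1) (hm0 : t / 2 < m) (hm1 : m < 1)
    (hfeas : (1 - m) * (1 - s) < (1 - t + s) * (1 + t - 3 * s))
    (lam : ℝ) (hlam : lam = (1 - m) / ((1 - t + s) * (1 + t - 3 * s)))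
    (π : Measure ℝ)
    (hπ : π = ENNReal.ofReal (lam * (1 - t + s)) • Measure.dirac s
            + ENNReal.ofReal (lam * (t - 2 * s)) • Measure.dirac (t - s)
            + ENNReal.ofReal (1 - lam * (1 - s)) • Measure.dirac (1:ℝ)) :
    IsProbabilityMeasure π ∧ π (Set.Icc (0:ℝ) 1)ᶜ = 0 ∧ (∫ x, x ∂π) = m ∧
      (π.prod π) {p : ℝ × ℝ | p.1 + p.2 ≤ t}
        = ENNReal.ofReal ((1 - m) ^ 2 / ((1 - t + s) * (1 + t - 3 * s))) :=
  stmt_17_general s t m hs0 hs ht2 hm1 hfeas lam hlam π hπ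
end
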